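/- With τ ≠ 0 a fixed real constant and L → ∞, one has √L ∫_{−√(log L/L)}^{0} (τ v − 2 v⁴ L) e^{−2v² L} dv = −(τ + o(1))/(4√L). In particular this quantity is asymptotically of exact order 1/√L, establishing that the error term O(1/√(log₂ x)) in the Gaussian approximation is optimal. -/

import Mathlib

/-!
On `[-a, 0]` with `a = √(log L / L)`, the odd part `τ v` of the integrand has an explicit
antiderivative, and since `2 a² L = 2 log L` it contributes exactly `τ (L⁻² - 1) / (4L)`.
The quartic part is uniformly small: `v⁴ e^{-2v²L} ≤ L⁻²`, so after multiplication by `8L²`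
it is at most `8a → 0`.
-/

open Real Filter Topology

lemma integral_mul_exp_neg_mul_sq {c : ℝ} (hc : c ≠ 0) (a b : ℝ) :
    ∫ v in a..b, v * exp (-c * v ^ 2) = (exp (-c * a ^ 2) - exp (-c * b ^ 2)) / (2 * c) := by
  have hderiv (v : ℝ) :
      HasDerivAt (fun w ↦ -exp (-c * w ^ 2) / (2 * c)) (v * exp (-c * v ^ 2)) v := by
    have := (((hasDerivAt_pow 2 v).const_mul (-c)).exp.neg).div_const (2 * c)
    refine this.congr_deriv ?_
    norm_num
    field_simp
  rw [intervalIntegral.integral_eq_sub_of_hasDerivAt (fun v _ ↦ hderiv v)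
    ((by fun_prop : Continuous fun v ↦ v * exp (-c * v ^ 2)).intervalIntegrable _ _)]
  ring

lemma pow_four_mul_exp_neg_mul_sq_le {c : ℝ} (hc : 0 < c) (v : ℝ) :
    v ^ 4 * exp (-c * v ^ 2) ≤ 4 / c ^ 2 := by
  set t := c * v ^ 2 / 2 with ht
  have ht0 : 0 ≤ t := by positivity
  have hsq : t ^ 2 ≤ exp t ^ 2 :=
    pow_le_pow_left₀ ht0 ((le_add_of_nonneg_right zero_le_one).trans (add_one_le_exp t)) 2
  have hexp : exp (-c * v ^ 2) = (exp t ^ 2)⁻¹ := by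
    rw [← exp_nat_mul, ← exp_neg, ht]
    ring_nf
  have hv : v ^ 4 = 4 / c ^ 2 * t ^ 2 := by
    rw [ht]
    field_simp
    ring
  rw [hexp, hv, mul_assoc, ← div_eq_mul_inv]
  exact mul_le_of_le_one_right (by positivity) ((div_le_one (by positivity)).2 hsq)

lemma norm_integral_pow_four_mul_exp_neg_mul_sq_le {c : ℝ} (hc : 0 < c) (a b : ℝ) :
    ‖∫ v in a..b, v ^ 4 * exp (-c * v ^ 2)‖ ≤ 4 / c ^ 2 * |b - a| :=
  intervalIntegral.norm_integral_le_of_norm_le_const fun v _ ↦ by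
    rw [Real.norm_of_nonneg (by positivity)]
    exact pow_four_mul_exp_neg_mul_sq_le hc v

lemma tendsto_sqrt_log_div_self_atTop :
    Tendsto (fun L : ℝ ↦ √(log L / L)) atTop (𝓝 0) := by
  simpa [Function.comp_def] using
    (continuous_sqrt.tendsto 0).comp isLittleO_log_id_atTop.tendsto_div_nhds_zero

lemma exp_neg_two_mul_sqrt_log_div_self_sq {L : ℝ} (hL : 1 ≤ L) :
    exp (-(2 * L) * √(log L / L) ^ 2) = (L ^ 2)⁻¹ := by
  have hL0 : 0 < L := zero_lt_one.trans_le hL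
  rw [sq_sqrt (div_nonneg (log_nonneg hL) hL0.le), ← exp_log (pow_pos hL0 2), ← exp_neg,
    log_pow]
  congr 1
  field_simp
  push_cast
  ring

lemma four_mul_integral_eq {τ L : ℝ} (hL : 1 ≤ L) :
    4 * L * ∫ v in (-√(log L / L))..0, (τ * v - 2 * v ^ 4 * L) * exp (-2 * v ^ 2 * L) =
      τ * ((L ^ 2)⁻¹ - 1) -
        8 * L ^ 2 * ∫ v in (-√(log L / L))..0, v ^ 4 * exp (-(2 * L) * v ^ 2) := by
  have hL0 : 0 < L := zero_lt_one.trans_le hL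
  set a := √(log L / L)
  have hsplit : ∫ v in (-a)..0, (τ * v - 2 * v ^ 4 * L) * exp (-2 * v ^ 2 * L) =
      τ * (∫ v in (-a)..0, v * exp (-(2 * L) * v ^ 2)) -
        2 * L * ∫ v in (-a)..0, v ^ 4 * exp (-(2 * L) * v ^ 2) := by
    rw [← intervalIntegral.integral_const_mul, ← intervalIntegral.integral_const_mul,
      ← intervalIntegral.integral_sub ((by fun_prop : Continuous _).intervalIntegrable _ _)
        ((by fun_prop : Continuous _).intervalIntegrable _ _)]
    congr 1 with v
    ring_nf
  rw [hsplit, integral_mul_exp_neg_mul_sq (by positivity), neg_sq,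
    exp_neg_two_mul_sqrt_log_div_self_sq hL, zero_pow two_ne_zero, mul_zero, exp_zero]
  field_simp
  ring

lemma tendsto_error_term :
    Tendsto
      (fun L : ℝ ↦ 8 * L ^ 2 * ∫ v in (-√(log L / L))..0, v ^ 4 * exp (-(2 * L) * v ^ 2))
      atTop (𝓝 0) := by
  refine squeeze_zero_norm' ?_ (by simpa using tendsto_sqrt_log_div_self_atTop.const_mul 8)
  filter_upwards [eventually_gt_atTop 0] with L hL
  calc _ = 8 * L ^ 2 * ‖∫ v in (-√(log L / L))..0, v ^ 4 * exp (-(2 * L) * v ^ 2)‖ := by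
        rw [norm_mul, Real.norm_of_nonneg (by positivity)]
    _ ≤ 8 * L ^ 2 * (4 / (2 * L) ^ 2 * |0 - -√(log L / L)|) := by
        gcongr
        exact norm_integral_pow_four_mul_exp_neg_mul_sq_le (by positivity) _ _
    _ = 8 * √(log L / L) := by
        rw [zero_sub, neg_neg, abs_of_nonneg (sqrt_nonneg _)]
        field_simp
        ring

theorem optimality_integral_general (τ : ℝ) :
    Filter.Tendsto (fun L : ℝ =>
        4 * L * ∫ v in (-Real.sqrt (Real.log L / L))..(0:ℝ),
          (τ * v - 2 * v ^ 4 * L) * Real.exp (-2 * v ^ 2 * L))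
      Filter.atTop (nhds (-τ)) := by
  have hmain : Tendsto (fun L : ℝ ↦ τ * ((L ^ 2)⁻¹ - 1)) atTop (𝓝 (-τ)) := by
    simpa using ((tendsto_pow_atTop two_ne_zero).inv_tendsto_atTop.sub_const 1).const_mul τ
  refine (sub_zero (-τ) ▸ hmain.sub tendsto_error_term).congr' ?_
  filter_upwards [eventually_ge_atTop 1] with L hL
  exact (four_mul_integral_eq hL).symm

/-- Optimality integral: for fixed τ ≠ 0, as L → ∞,
√L ∫_{−√(log L/L)}^0 (τv − 2v⁴L) e^{−2v²L} dv = −(τ + o(1))/(4√L),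
equivalently 4L·∫_{−√(log L/L)}^0 (τv − 2v⁴L) e^{−2v²L} dv → −τ. -/
theorem optimality_integral (τ : ℝ) (hτ : τ ≠ 0) :
    Filter.Tendsto (fun L : ℝ =>
        4 * L * ∫ v in (-Real.sqrt (Real.log L / L))..(0:ℝ),
          (τ * v - 2 * v ^ 4 * L) * Real.exp (-2 * v ^ 2 * L))
      Filter.atTop (nhds (-τ)) :=
  optimality_integral_general τ
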